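/- arXiv:2412.00024 — 2 statements merged into one kernel-verified Lean document; each statement's English description precedes it below -/
import Mathlib

section
/- For every complex number z with |z| < 1, the sum over k >= 0 of (H_{3k+1} - H_k) * z^k / ((3k+1) * binomial(3k,k)) equals -∫_0^1 ln(x) / (1 - z*x*(1-x)^2) dx. -/
/-!
Expand `1 / (1 - z x (1 - x)²)` as a geometric series, which converges uniformly on `[0, 1]`
since `x (1 - x)² ≤ 1` there, and integrate term by term against `log x`. The `k`-th term is
`z^k` times the log-moment `∫₀¹ x^a (1 - x)^b log x = -a! b! / (a + b + 1)! · (H_{a+b+1} - H_a)`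
at `a = k`, `b = 2k`; induction on `b` reduces it, via `(1 - x)^{b+1} = (1 - x)^b - x (1 - x)^b`,
to `∫₀¹ x^a log x = -1 / (a + 1)²`.
-/

open MeasureTheory Real

theorem integral_div_one_sub_eq_tsum {α 𝕜 : Type*} [MeasurableSpace α] {μ : Measure α}
    [RCLike 𝕜] {f g : α → 𝕜} {r : ℝ} (hf : Integrable f μ) (hg : AEStronglyMeasurable g μ)
    (hgr : ∀ᵐ x ∂μ, ‖g x‖ ≤ r) (hr : r < 1) :
    ∫ x, f x / (1 - g x) ∂μ = ∑' k : ℕ, ∫ x, g x ^ k * f x ∂μ := by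
  obtain ⟨s, hs0, hs1, hgs⟩ : ∃ s : ℝ, 0 ≤ s ∧ s < 1 ∧ ∀ᵐ x ∂μ, ‖g x‖ ≤ s :=
    ⟨max r 0, le_max_right _ _, max_lt hr one_pos,
      hgr.mono fun _ hx => hx.trans (le_max_left _ _)⟩
  have hint (k : ℕ) : Integrable (fun x => g x ^ k * f x) μ :=
    hf.bdd_mul (hg.pow k) (hgs.mono fun x hx => by
      simpa [norm_pow] using pow_le_pow_left₀ (norm_nonneg _) hx k)
  have hnorm (k : ℕ) : ∫ x, ‖g x ^ k * f x‖ ∂μ ≤ s ^ k * ∫ x, ‖f x‖ ∂μ := by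
    rw [← integral_const_mul]
    refine integral_mono_ae (hint k).norm (hf.norm.const_mul _) (hgs.mono fun x hx => ?_)
    dsimp only
    rw [norm_mul, norm_pow]
    gcongr
  have hsum : Summable fun k : ℕ => ∫ x, ‖g x ^ k * f x‖ ∂μ :=
    .of_nonneg_of_le (fun k => integral_nonneg fun x => norm_nonneg _) hnorm
      ((summable_geometric_of_lt_one hs0 hs1).mul_right _)
  rw [integral_tsum_of_summable_integral_norm hint hsum]
  refine integral_congr_ae (hgs.mono fun x hx => ?_)
  dsimp only
  rw [tsum_mul_right, tsum_geometric_of_norm_lt_one (hx.trans_lt hs1), div_eq_inv_mul]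

theorem intervalIntegrable_pow_mul_one_sub_pow_mul_log (a b : ℕ) :
    IntervalIntegrable (fun x : ℝ => x ^ a * (1 - x) ^ b * log x) volume 0 1 :=
  intervalIntegral.intervalIntegrable_log'.continuousOn_mul (by fun_prop)

theorem integral_pow_mul_log_zero_one (a : ℕ) :
    ∫ x in (0 : ℝ)..1, x ^ a * log x = -1 / ((a : ℝ) + 1) ^ 2 := by
  have ha : (a : ℝ) + 1 ≠ 0 := by positivity
  have hderiv : ∀ x ∈ Set.Ioo (0 : ℝ) 1, HasDerivAt
      (fun x => x ^ a * (x * log x) / ((a : ℝ) + 1) - x ^ (a + 1) / ((a : ℝ) + 1) ^ 2)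
      (x ^ a * log x) x := by
    intro x hx
    have hx0 : x ≠ 0 := hx.1.ne'
    refine ((((hasDerivAt_pow a x).mul ((hasDerivAt_id' x).mul (hasDerivAt_log hx0))).div_const
      ((a : ℝ) + 1)).sub ((hasDerivAt_pow (a + 1) x).div_const (((a : ℝ) + 1) ^ 2))).congr_deriv ?_
    rcases a with _ | a
    · field_simp
      ring
    · simp only [Pi.mul_apply, Nat.add_sub_cancel, pow_succ]
      push_cast
      field_simp
      ring
  rw [intervalIntegral.integral_eq_sub_of_hasDerivAt_of_le zero_le_one (by fun_prop) hderiv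
    (by simpa using intervalIntegrable_pow_mul_one_sub_pow_mul_log a 0)]
  simp
  ring

open Nat in
theorem integral_pow_mul_one_sub_pow_mul_log (a b : ℕ) :
    ∫ x in (0 : ℝ)..1, x ^ a * (1 - x) ^ b * log x =
      -((a ! * b ! / (a + b + 1)! : ℝ) * ((harmonic (a + b + 1) - harmonic a : ℚ) : ℝ)) := by
  induction b generalizing a with
  | zero =>
    simp only [pow_zero, mul_one, integral_pow_mul_log_zero_one, add_zero, harmonic_succ,
      factorial_succ, factorial_zero]
    push_cast
    field_simp
    ring
  | succ b ih =>
    have hsplit : ∀ x : ℝ, x ^ a * (1 - x) ^ (b + 1) * log x =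
        x ^ a * (1 - x) ^ b * log x - x ^ (a + 1) * (1 - x) ^ b * log x := fun x => by ring
    simp_rw [hsplit]
    rw [intervalIntegral.integral_sub (intervalIntegrable_pow_mul_one_sub_pow_mul_log a b)
      (intervalIntegrable_pow_mul_one_sub_pow_mul_log (a + 1) b), ih a, ih (a + 1),
      show a + 1 + b + 1 = a + b + 1 + 1 by ring, show a + (b + 1) + 1 = a + b + 1 + 1 by ring,
      harmonic_succ (a + b + 1), harmonic_succ a, factorial_succ (a + b + 1), factorial_succ a,
      factorial_succ b]
    push_cast
    field_simp
    ring

open Nat in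
theorem factorial_mul_factorial_div_factorial_add_succ (a b : ℕ) :
    (a ! * b ! / (a + b + 1)! : ℝ) = 1 / ((a + b + 1) * (a + b).choose a) := by
  rw [Nat.cast_add_choose, factorial_succ]
  push_cast
  field_simp

theorem integral_pow_mul_one_sub_sq_pow_mul_log (k : ℕ) :
    ∫ x in (0 : ℝ)..1, x ^ k * (1 - x) ^ (2 * k) * log x =
      -(((harmonic (3 * k + 1) - harmonic k : ℚ) : ℝ) / ((3 * k + 1) * (3 * k).choose k)) := by
  rw [integral_pow_mul_one_sub_pow_mul_log, factorial_mul_factorial_div_factorial_add_succ,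
    show k + 2 * k = 3 * k by ring]
  push_cast
  ring

theorem norm_mul_mul_one_sub_sq_le (z : ℂ) {x : ℝ} (hx : x ∈ Set.Icc (0 : ℝ) 1) :
    ‖z * (x : ℂ) * (1 - (x : ℂ)) ^ 2‖ ≤ ‖z‖ := by
  have hx' : 0 ≤ x * (1 - x) ^ 2 := mul_nonneg hx.1 (sq_nonneg _)
  rw [mul_assoc, norm_mul,
    show (x : ℂ) * (1 - x) ^ 2 = ((x * (1 - x) ^ 2 : ℝ) : ℂ) by push_cast; ring,
    Complex.norm_real, Real.norm_of_nonneg hx']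
  exact mul_le_of_le_one_right (norm_nonneg z)
    (mul_le_one₀ hx.2 (sq_nonneg _) (pow_le_one₀ (sub_nonneg.2 hx.2) (by linarith [hx.1])))

open Complex in
theorem stmt_1 (z : ℂ) (hz : ‖z‖ < 1) :
    ∑' k : ℕ, ((harmonic (3 * k + 1) : ℂ) - (harmonic k : ℂ)) * z ^ k /
        ((3 * k + 1) * (Nat.choose (3 * k) k : ℂ)) =
      -∫ x in (0:ℝ)..1, (Real.log x : ℂ) / (1 - z * (x : ℂ) * (1 - (x : ℂ)) ^ 2) := by
  have hbound : ∀ᵐ x : ℝ ∂(volume.restrict (Set.Ioc (0 : ℝ) 1)),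
      ‖z * (x : ℂ) * (1 - (x : ℂ)) ^ 2‖ ≤ ‖z‖ :=
    ae_restrict_of_forall_mem measurableSet_Ioc fun x hx =>
      norm_mul_mul_one_sub_sq_le z (Set.Ioc_subset_Icc_self hx)
  have hlog : Integrable (fun x : ℝ => (Real.log x : ℂ)) (volume.restrict (Set.Ioc (0 : ℝ) 1)) :=
    (intervalIntegral.intervalIntegrable_log' (a := 0) (b := 1)).1.ofReal
  rw [intervalIntegral.integral_of_le zero_le_one,
    integral_div_one_sub_eq_tsum hlog (by fun_prop) hbound hz, ← tsum_neg]
  refine tsum_congr fun k => ?_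
  have hterm (x : ℝ) : (z * (x : ℂ) * (1 - (x : ℂ)) ^ 2) ^ k * (Real.log x : ℂ) =
      z ^ k * ((x ^ k * (1 - x) ^ (2 * k) * Real.log x : ℝ) : ℂ) := by
    push_cast
    rw [mul_pow, mul_pow, pow_mul]
    ring
  simp_rw [hterm]
  rw [integral_const_mul, integral_complex_ofReal, ← intervalIntegral.integral_of_le zero_le_one,
    integral_pow_mul_one_sub_sq_pow_mul_log]
  push_cast
  ring
end

section
/- The integral from 0 to 1 of ln(x) / ((x-2)(x²+1)) dx equals π²/48 - (ln 2)²/10 + (2/5)·G, where G is Catalan's constant. -/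
/-!
Partial fractions give
`1 / ((x - 2) (x² + 1)) = (1/5) (1 / (x - 2) - x / (x² + 1) - 2 / (x² + 1))`.
On `(0, 1)` each of the three functions is a power series `∑ cₙ x^{mₙ}`, and since
`∫₀¹ x^k log x = -1 / (k + 1)²` the three integrals are `Li₂(1/2)`, `-η(2)/4 = -π²/48`
and `-G`.
Finally `Li₂(1/2) = π²/12 - log² 2 / 2` by Euler's reflection argument.
-/

open Real

/-- Catalan's constant. -/
noncomputable def catalan' : ℝ := ∑' j : ℕ, (-1) ^ j / (2 * (j : ℝ) + 1) ^ 2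

open MeasureTheory Set

theorem hasSum_one_div_succ_sq : HasSum (fun n : ℕ => 1 / ((n : ℝ) + 1) ^ 2) (π ^ 2 / 6) := by
  simpa using (hasSum_nat_add_iff' 1).2 hasSum_zeta_two

theorem hasSum_neg_one_pow_div_succ_sq :
    HasSum (fun n : ℕ => (-1) ^ n / ((n : ℝ) + 1) ^ 2) (π ^ 2 / 12) := by
  set f : ℕ → ℝ := fun n => 1 / ((n : ℝ) + 1) ^ 2
  have hodd : HasSum (fun k => f (2 * k + 1)) (π ^ 2 / 24) := by
    have hf : (fun k => f (2 * k + 1)) = fun k => f k / 4 := by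
      ext k
      simp only [f]
      push_cast
      field_simp
      ring
    rw [hf]
    simpa only [show π ^ 2 / 6 / 4 = π ^ 2 / 24 by ring] using hasSum_one_div_succ_sq.div_const 4
  obtain ⟨E, heven⟩ : Summable fun k => f (2 * k) :=
    hasSum_one_div_succ_sq.summable.comp_injective (mul_right_injective₀ two_ne_zero)
  have hE : E = π ^ 2 / 8 := by
    linarith [(heven.even_add_odd hodd).unique hasSum_one_div_succ_sq]
  have h := HasSum.even_add_odd (f := fun n => (-1) ^ n / ((n : ℝ) + 1) ^ 2)
    (by simpa [pow_mul, f] using heven) (by simpa [pow_add, pow_mul, neg_div, f] using hodd.neg)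
  convert h using 1
  rw [hE]
  ring

theorem summable_half_pow_div_sq :
    Summable fun n : ℕ => (1 / 2 : ℝ) ^ (n + 1) / ((n : ℝ) + 1) ^ 2 := by
  refine summable_geometric_two.of_nonneg_of_le (fun n => by positivity) fun n => ?_
  calc (1 / 2 : ℝ) ^ (n + 1) / ((n : ℝ) + 1) ^ 2 ≤ (1 / 2) ^ (n + 1) :=
        div_le_self (by positivity) (one_le_pow₀ (by linarith [(n.cast_nonneg : (0 : ℝ) ≤ n)]))
    _ ≤ (1 / 2) ^ n := pow_le_pow_of_le_one (by norm_num) (by norm_num) n.le_succ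

theorem hasSum_inv_sub_one {x : ℝ} (hx : |x| < 1) :
    HasSum (fun n => -1 * x ^ n) (x - 1)⁻¹ := by
  have h := (hasSum_geometric_of_abs_lt_one hx).neg
  rw [← inv_neg, neg_sub] at h
  exact h.congr_fun fun n => by ring

theorem hasSum_inv_sub_two {x : ℝ} (hx : |x| < 2) :
    HasSum (fun n => -(1 / 2) ^ (n + 1) * x ^ n) (x - 2)⁻¹ := by
  have hx2 : |x / 2| < 1 := by rw [abs_div, abs_two]; linarith
  have h := (hasSum_geometric_of_abs_lt_one hx2).mul_left (-(1 / 2))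
  have hx2' : x - 2 ≠ 0 := by linarith [le_abs_self x]
  rw [show -(1 / 2) * (1 - x / 2)⁻¹ = (x - 2)⁻¹ by
    rw [show 1 - x / 2 = -(x - 2) / 2 by ring, inv_div, div_neg]; field_simp] at h
  exact h.congr_fun fun n => by ring

theorem hasSum_inv_sq_add_one {x : ℝ} (hx : |x| < 1) :
    HasSum (fun n => (-1) ^ n * x ^ (2 * n)) (x ^ 2 + 1)⁻¹ := by
  have hx2 : |-x ^ 2| < 1 := by
    rw [abs_neg, abs_pow, sq_lt_one_iff_abs_lt_one, abs_abs]; exact hx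
  simpa [pow_mul, ← mul_pow, sub_eq_add_neg, add_comm] using hasSum_geometric_of_abs_lt_one hx2

theorem intervalIntegrable_mul_log {g : ℝ → ℝ} {a b : ℝ} (hg : ContinuousOn g (uIcc a b)) :
    IntervalIntegrable (fun x => g x * log x) volume a b :=
  intervalIntegral.intervalIntegrable_log'.continuousOn_mul hg

theorem integral_pow_mul_log (n : ℕ) (a : ℝ) :
    ∫ x in 0..a, x ^ n * log x = a ^ (n + 1) * log a / (n + 1) - a ^ (n + 1) / (n + 1) ^ 2 := by
  have hcont : Continuous fun y : ℝ => y ^ (n + 1) * log y :=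
    ((continuous_pow n).mul continuous_mul_log).congr fun y => by
      simp only [Pi.mul_apply]
      ring
  rw [intervalIntegral.integral_eq_sub_of_hasDeriv_right
    (f := fun y => y ^ (n + 1) * log y / (n + 1) - y ^ (n + 1) / (n + 1) ^ 2)
    (by fun_prop) (fun x hx => ?_) (intervalIntegrable_mul_log (continuous_pow n).continuousOn)]
  · simp
  · have hx0 : x ≠ 0 := by
      rintro rfl
      rcases le_total 0 a with h | h <;> simp [h] at hx
    refine (((hasDerivAt_pow (n + 1) x).mul (hasDerivAt_log hx0)).div_const _ |>.sub
      ((hasDerivAt_pow (n + 1) x).div_const _)).hasDerivWithinAt.congr_deriv ?_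
    field_simp
    push_cast
    ring

/-- Summability in `ℝ` is absolute, and since `w ≥ 0` the absolute value of the `n`-th term is
`∫ ‖c n * x ^ m n * w x‖`, so the series may be integrated termwise. -/
theorem hasSum_integral_mul_of_hasSum_pow {a : ℝ} (ha : 0 ≤ a) {w g : ℝ → ℝ} {c : ℕ → ℝ}
    {m : ℕ → ℕ} (hw : ∀ x ∈ Ioo 0 a, 0 ≤ w x) (hw_int : IntervalIntegrable w volume 0 a)
    (hg : ∀ x ∈ Ioo 0 a, HasSum (fun n => c n * x ^ m n) (g x))
    (hc : Summable fun n => c n * ∫ x in 0..a, x ^ m n * w x) :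
    HasSum (fun n => c n * ∫ x in 0..a, x ^ m n * w x) (∫ x in 0..a, g x * w x) := by
  simp only [intervalIntegral.integral_of_le ha, integral_Ioc_eq_integral_Ioo] at hc ⊢
  have hint : ∀ k : ℕ, IntegrableOn (fun x => x ^ k * w x) (Ioo 0 a) := fun k =>
    ((hw_int.continuousOn_mul (continuous_pow k).continuousOn).1).mono_set Ioo_subset_Ioc_self
  have hnorm : ∀ n, ∫ x in Ioo 0 a, ‖c n * (x ^ m n * w x)‖
      = |c n * ∫ x in Ioo 0 a, x ^ m n * w x| := by
    intro n
    have hnonneg : ∀ x ∈ Ioo 0 a, 0 ≤ x ^ m n * w x := fun x hx =>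
      mul_nonneg (pow_nonneg hx.1.le _) (hw x hx)
    rw [abs_mul, abs_of_nonneg (setIntegral_nonneg measurableSet_Ioo hnonneg),
      ← integral_const_mul]
    refine setIntegral_congr_fun measurableSet_Ioo fun x hx => ?_
    rw [norm_mul, Real.norm_eq_abs, Real.norm_eq_abs, abs_of_nonneg (hnonneg x hx)]
  have hsum := hasSum_integral_of_summable_integral_norm (fun n => (hint (m n)).const_mul (c n))
    (by simpa only [hnorm] using hc.abs)
  simp only [integral_const_mul] at hsum
  rwa [setIntegral_congr_fun measurableSet_Ioo fun x hx =>
    by simpa only [mul_assoc] using ((hg x hx).mul_right (w x)).tsum_eq.symm]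

theorem hasSum_integral_mul_log_of_hasSum_pow {g : ℝ → ℝ} {c : ℕ → ℝ} {m : ℕ → ℕ}
    (hg : ∀ x ∈ Ioo 0 1, HasSum (fun n => c n * x ^ m n) (g x))
    (hc : Summable fun n => c n / ((m n : ℝ) + 1) ^ 2) :
    HasSum (fun n => -(c n / ((m n : ℝ) + 1) ^ 2)) (∫ x in 0..1, g x * log x) := by
  have hmoment : ∀ k : ℕ, ∫ x in 0..1, x ^ k * -log x = 1 / ((k : ℝ) + 1) ^ 2 := fun k => by
    simp only [mul_neg, intervalIntegral.integral_neg, integral_pow_mul_log]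
    simp
  have h := hasSum_integral_mul_of_hasSum_pow zero_le_one
    (fun x hx => neg_nonneg.2 (log_nonpos hx.1.le hx.2.le))
    intervalIntegral.intervalIntegrable_log'.neg hg
    (by simpa only [hmoment, mul_one_div] using hc)
  simp only [hmoment, mul_one_div] at h
  simpa only [mul_neg, intervalIntegral.integral_neg, neg_neg] using h.neg

theorem integral_inv_sq_add_one_mul_log : ∫ x in 0..1, (x ^ 2 + 1)⁻¹ * log x = -catalan' := by
  have hsummable : Summable fun n : ℕ => (-1) ^ n / (2 * (n : ℝ) + 1) ^ 2 := by
    refine hasSum_one_div_succ_sq.summable.of_norm_bounded fun n => ?_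
    rw [norm_div, norm_pow, norm_neg, norm_one, one_pow, Real.norm_eq_abs,
      abs_of_pos (by positivity)]
    gcongr
    linarith [(n.cast_nonneg : (0 : ℝ) ≤ n)]
  have h := hasSum_integral_mul_log_of_hasSum_pow (m := fun n => 2 * n)
    (fun x hx => hasSum_inv_sq_add_one (abs_lt.2 ⟨by linarith [hx.1], hx.2⟩))
    (by push_cast; exact hsummable)
  push_cast at h
  exact h.unique hsummable.hasSum.neg

theorem integral_div_sq_add_one_mul_log :
    ∫ x in 0..1, x / (x ^ 2 + 1) * log x = -(π ^ 2 / 48) := by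
  have hsum :
      HasSum (fun n : ℕ => -((-1) ^ n / (((2 * n + 1 : ℕ) : ℝ) + 1) ^ 2)) (-(π ^ 2 / 48)) := by
    have h := (hasSum_neg_one_pow_div_succ_sq.div_const 4).neg
    rw [show -(π ^ 2 / 12 / 4) = -(π ^ 2 / 48) by ring] at h
    exact h.congr_fun fun n => by
      push_cast
      field_simp
      ring
  refine (hasSum_integral_mul_log_of_hasSum_pow (c := fun n => (-1) ^ n)
    (m := fun n => 2 * n + 1) (fun x hx => ?_) (by simpa using hsum.summable.neg)).unique hsum
  have h := (hasSum_inv_sq_add_one (abs_lt.2 ⟨by linarith [hx.1], hx.2⟩)).mul_left x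
  rw [← div_eq_mul_inv] at h
  exact h.congr_fun fun n => by ring

theorem intervalIntegrable_inv_sub_one_mul_log {a b : ℝ} (ha : 0 < a) (hb : 0 < b) :
    IntervalIntegrable (fun x => (x - 1)⁻¹ * log x) volume a b := by
  have hcont : ContinuousOn (dslope log 1) (Ioi 0) :=
    (continuousOn_dslope (Ioi_mem_nhds one_pos)).2
      ⟨continuousOn_log.mono fun x hx => ne_of_gt hx, differentiableAt_log one_ne_zero⟩
  refine (hcont.mono fun x hx => ?_).intervalIntegrable.congr_ae ?_
  · rcases le_total a b with h | h
    · exact ha.trans_le (by simpa [h] using hx.1)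
    · exact hb.trans_le (by simpa [h] using hx.1)
  · filter_upwards [ae_restrict_of_ae (volume.ae_ne 1)] with x hx
    rw [dslope_of_ne _ hx, slope_def_field, log_one, sub_zero, div_eq_inv_mul]

theorem integral_inv_sub_one_mul_log_zero_one : ∫ x in 0..1, (x - 1)⁻¹ * log x = π ^ 2 / 6 := by
  have hsum : HasSum (fun n : ℕ => -(-1 / ((n : ℝ) + 1) ^ 2)) (π ^ 2 / 6) :=
    hasSum_one_div_succ_sq.congr_fun fun n => by ring
  exact (hasSum_integral_mul_log_of_hasSum_pow (c := fun _ => -1) (m := fun n => n)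
    (fun x hx => hasSum_inv_sub_one (abs_lt.2 ⟨by linarith [hx.1], hx.2⟩))
    (by simpa using hsum.summable.neg)).unique hsum

theorem integral_inv_sub_one_mul_log_zero_half :
    ∫ x in 0..1 / 2, (x - 1)⁻¹ * log x
      = log 2 ^ 2 + ∑' n : ℕ, (1 / 2 : ℝ) ^ (n + 1) / ((n : ℝ) + 1) ^ 2 := by
  have hmoment : ∀ k : ℕ, ∫ x in 0..1 / 2, x ^ k * -log x
      = log 2 * ((1 / 2) ^ (k + 1) / (k + 1)) + (1 / 2) ^ (k + 1) / ((k : ℝ) + 1) ^ 2 := by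
    intro k
    rw [funext fun x => mul_neg (x ^ k) (log x), intervalIntegral.integral_neg,
      integral_pow_mul_log, one_div, log_inv]
    ring
  have hlog : HasSum (fun n : ℕ => (1 / 2 : ℝ) ^ (n + 1) / (n + 1)) (log 2) := by
    have h := hasSum_pow_div_log_of_abs_lt_one (x := 1 / 2) (by norm_num [abs_of_pos])
    rwa [show (1 : ℝ) - 1 / 2 = 2⁻¹ by norm_num, log_inv, neg_neg] at h
  have hsum := ((hlog.mul_left (log 2)).add summable_half_pow_div_sq.hasSum).mul_left (-1)
  have h := hasSum_integral_mul_of_hasSum_pow (a := 1 / 2) (by norm_num) (c := fun _ => -1)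
    (m := fun n => n) (w := fun x => -log x)
    (fun x hx => neg_nonneg.2 (log_nonpos hx.1.le (by linarith [hx.2])))
    intervalIntegral.intervalIntegrable_log'.neg
    (fun x hx => hasSum_inv_sub_one (abs_lt.2 ⟨by linarith [hx.1], by linarith [hx.2]⟩))
    (by simpa only [hmoment] using hsum.summable)
  simp only [hmoment] at h
  have := h.unique hsum
  rw [funext fun x => mul_neg ((x - 1)⁻¹) (log x), intervalIntegral.integral_neg] at this
  linarith

theorem integral_inv_sub_one_mul_log_half_one :
    ∫ x in 1 / 2..1, (x - 1)⁻¹ * log x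
      = ∑' n : ℕ, (1 / 2 : ℝ) ^ (n + 1) / ((n : ℝ) + 1) ^ 2 := by
  have hsub := intervalIntegral.integral_comp_sub_left (fun x => (x - 1)⁻¹ * log x) (1 : ℝ)
    (a := 0) (b := 1 / 2)
  rw [sub_zero, show (1 : ℝ) - 1 / 2 = 1 / 2 by norm_num] at hsub
  simp only [sub_sub_cancel_left, inv_neg, neg_mul, intervalIntegral.integral_neg] at hsub
  rw [← hsub, ← intervalIntegral.integral_neg]
  have hmoment : ∀ k : ℕ, ∫ x in (0 : ℝ)..1 / 2, x ^ k = (1 / 2) ^ (k + 1) / (k + 1) :=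
    fun k => by simp [integral_pow]
  have hsum : HasSum (fun n : ℕ => 1 / ((n : ℝ) + 1) * ((1 / 2) ^ (n + 1) / (n + 1)))
      (∑' n : ℕ, (1 / 2 : ℝ) ^ (n + 1) / ((n : ℝ) + 1) ^ 2) :=
    summable_half_pow_div_sq.hasSum.congr_fun fun n => by field_simp
  have h := hasSum_integral_mul_of_hasSum_pow (a := 1 / 2) (by norm_num)
    (c := fun n => 1 / ((n : ℝ) + 1)) (m := fun n => n) (g := fun x => -(x⁻¹ * log (1 - x)))
    (w := fun _ => 1) (fun _ _ => zero_le_one) intervalIntegrable_const (fun x hx => ?_)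
    (by simpa only [mul_one, hmoment] using hsum.summable)
  · simp only [mul_one, hmoment] at h
    exact h.unique hsum
  · have h := (hasSum_pow_div_log_of_abs_lt_one (x := x)
      (abs_lt.2 ⟨by linarith [hx.1], by linarith [hx.2]⟩)).mul_left x⁻¹
    rw [mul_neg] at h
    exact h.congr_fun fun n => by
      field_simp [hx.1.ne']
      ring

/-- `Li₂(1/2)`, by Euler's reflection argument: split `∫₀¹ log x / (x - 1) = ζ(2)` at `1/2`;
each half equals `Li₂(1/2)`, the first up to `log² 2`. -/
theorem hasSum_half_pow_div_sq :
    HasSum (fun n : ℕ => (1 / 2 : ℝ) ^ (n + 1) / ((n : ℝ) + 1) ^ 2)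
      (π ^ 2 / 12 - log 2 ^ 2 / 2) := by
  have hint : IntervalIntegrable (fun x => (x - 1)⁻¹ * log x) volume 0 (1 / 2) :=
    intervalIntegrable_mul_log <| ContinuousOn.inv₀ (by fun_prop) fun x hx => by
      rw [uIcc_of_le (by norm_num)] at hx
      exact (by linarith [hx.2] : x - 1 < 0).ne
  have hsplit := intervalIntegral.integral_add_adjacent_intervals hint
    (intervalIntegrable_inv_sub_one_mul_log (a := 1 / 2) (b := 1) (by norm_num) one_pos)
  rw [integral_inv_sub_one_mul_log_zero_half, integral_inv_sub_one_mul_log_half_one,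
    integral_inv_sub_one_mul_log_zero_one] at hsplit
  rw [show π ^ 2 / 12 - log 2 ^ 2 / 2 = ∑' n : ℕ, (1 / 2 : ℝ) ^ (n + 1) / ((n : ℝ) + 1) ^ 2 by
    linarith]
  exact summable_half_pow_div_sq.hasSum

theorem integral_inv_sub_two_mul_log :
    ∫ x in 0..1, (x - 2)⁻¹ * log x = π ^ 2 / 12 - log 2 ^ 2 / 2 := by
  have hsum : HasSum (fun n : ℕ => -(-(1 / 2 : ℝ) ^ (n + 1) / ((n : ℝ) + 1) ^ 2))
      (π ^ 2 / 12 - log 2 ^ 2 / 2) :=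
    hasSum_half_pow_div_sq.congr_fun fun n => by ring
  exact (hasSum_integral_mul_log_of_hasSum_pow (c := fun n => -(1 / 2) ^ (n + 1))
    (m := fun n => n)
    (fun x hx => hasSum_inv_sub_two (abs_lt.2 ⟨by linarith [hx.1], by linarith [hx.2]⟩))
    (by simpa using hsum.summable.neg)).unique hsum

theorem stmt_7 :
    ∫ x in (0:ℝ)..1, Real.log x / ((x - 2) * (x ^ 2 + 1)) =
      π ^ 2 / 48 - (Real.log 2) ^ 2 / 10 + (2 / 5) * catalan' := by
  have hx2 : ∀ x ∈ uIcc (0 : ℝ) 1, x - 2 ≠ 0 := fun x hx => by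
    rw [uIcc_of_le zero_le_one] at hx
    exact (by linarith [hx.2] : x - 2 < 0).ne
  have hpartial : EqOn (fun x => log x / ((x - 2) * (x ^ 2 + 1)))
      (fun x => 1 / 5 * ((x - 2)⁻¹ * log x) - 1 / 5 * (x / (x ^ 2 + 1) * log x)
        - 2 / 5 * ((x ^ 2 + 1)⁻¹ * log x)) (uIcc 0 1) := fun x hx => by
    have := hx2 x hx
    field_simp
    ring
  have hint₁ : IntervalIntegrable (fun x => (x - 2)⁻¹ * log x) volume 0 1 :=
    intervalIntegrable_mul_log <| ContinuousOn.inv₀ (by fun_prop) hx2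
  have hint₂ : IntervalIntegrable (fun x => x / (x ^ 2 + 1) * log x) volume 0 1 :=
    intervalIntegrable_mul_log (by fun_prop (disch := intros; positivity))
  have hint₃ : IntervalIntegrable (fun x => (x ^ 2 + 1)⁻¹ * log x) volume 0 1 :=
    intervalIntegrable_mul_log (by fun_prop (disch := intros; positivity))
  rw [intervalIntegral.integral_congr hpartial,
    intervalIntegral.integral_sub ((hint₁.const_mul _).sub (hint₂.const_mul _))
      (hint₃.const_mul _),
    intervalIntegral.integral_sub (hint₁.const_mul _) (hint₂.const_mul _),
    intervalIntegral.integral_const_mul, intervalIntegral.integral_const_mul,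
    intervalIntegral.integral_const_mul, integral_inv_sub_two_mul_log,
    integral_div_sq_add_one_mul_log, integral_inv_sq_add_one_mul_log]
  ring
end
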